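/- arXiv:1710.03220 — 2 statements merged into one kernel-verified Lean document; each statement's English description precedes it below -/
import Mathlib

section
/- Let G be a group acting on a commutative ring A by ring automorphisms, and let G_0 ⊴ G be a normal subgroup of finite index. For a subgroup H ≤ G write A^H for the invariant subring {a ∈ A : h·a = a for all h ∈ H}. If I ⊆ A is a G-stable ideal, then the radicals of the extension ideals (I ∩ A^G)·A and (I ∩ A^{G_0})·A coincide: √((I ∩ A^G)·A) = √((I ∩ A^{G_0})·A). -/
open Polynomial in
private lemma coeff_prod_X_sub_C_mem_aux {A : Type*} [CommRing A] (I : Ideal A) {ι : Type*}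
    (s : Finset ι) (f : ι → A) :
    (∀ i ∈ s, f i ∈ I) → ∀ k : ℕ, k < s.card → (∏ i ∈ s, (X - C (f i))).coeff k ∈ I := by
  induction s using Finset.cons_induction with
  | empty => intro _ k hk; simp at hk
  | cons j t hj ih =>
    intro hf k hk
    rw [Finset.prod_cons, sub_mul, coeff_sub]
    have hcj : f j ∈ I := hf j (Finset.mem_cons_self j t)
    have ht : ∀ i ∈ t, f i ∈ I := fun i hi => hf i (Finset.mem_cons_of_mem hi)
    rcases k with _ | k
    · rw [mul_coeff_zero, mul_coeff_zero, coeff_X_zero, zero_mul, zero_sub, coeff_C_zero]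
      exact (I.neg_mem_iff).2 (I.mul_mem_right _ hcj)
    · rw [coeff_X_mul, coeff_C_mul]
      rw [Finset.card_cons] at hk
      exact I.sub_mem (ih ht k (Nat.lt_of_succ_lt_succ hk)) (I.mul_mem_right _ hcj)

open Pointwise in
/-- **Saturations with respect to `G` and a finite-index normal subgroup agree.**
Let `G` be a group acting on a commutative ring `A` by ring automorphisms and
let `G₀ ⊴ G` be a normal subgroup of finite index.  For a subgroup `H ≤ G`,
`A^H = {a ∈ A | ∀ h ∈ H, h • a = a}` is the invariant subring.  If `I ⊆ A` is
a `G`-stable ideal, then the radicals of the extension ideals `(I ∩ A^G)·A`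
and `(I ∩ A^{G₀})·A` coincide. -/
theorem radical_span_invariants_eq_of_finite_index_normal
    {A : Type*} [CommRing A] {G : Type*} [Group G]
    [MulSemiringAction G A] (G₀ : Subgroup G) [G₀.Normal] [G₀.FiniteIndex]
    (I : Ideal A) (hstab : ∀ g : G, g • (I : Set A) = (I : Set A)) :
    (Ideal.span ((I : Set A) ∩ {a : A | ∀ g : G, g • a = a})).radical
      = (Ideal.span ((I : Set A) ∩ {a : A | ∀ g ∈ G₀, g • a = a})).radical := by
  classical
  rcases subsingleton_or_nontrivial A with hA | hA
  · exact Subsingleton.elim _ _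
  apply le_antisymm
  · apply Ideal.radical_mono
    apply Ideal.span_mono
    exact Set.inter_subset_inter_right _ (fun a ha g _ => ha g)
  · rw [Ideal.radical_le_radical_iff]
    rw [Ideal.span_le]
    rintro a ⟨haI, hainv⟩
    have : Fintype (G ⧸ G₀) := Fintype.ofFinite _
    set Q := G ⧸ G₀
    set f : Q → A := fun q => q.out • a with hf
    -- f is well-behaved under the G-action
    have hkey : ∀ (g : G) (q : Q), g • f q = f (g • q) := by
      intro g q
      have h1 : ((g • q : Q).out)⁻¹ * (g * q.out) ∈ G₀ := by
        rw [← QuotientGroup.eq, QuotientGroup.out_eq']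
        conv_lhs => rw [← QuotientGroup.out_eq' q]
        exact MulAction.Quotient.smul_mk G₀ g q.out
      have h2 : g * q.out = (g • q : Q).out * (((g • q : Q).out)⁻¹ * (g * q.out)) := by
        group
      simp only [hf]
      rw [← mul_smul, h2, mul_smul, hainv _ h1]
    have hfI : ∀ q : Q, f q ∈ I := by
      intro q
      have : f q ∈ (I : Set A) := by
        rw [← hstab q.out]; exact Set.smul_mem_smul_set haI
      exact this
    set P : Polynomial A := ∏ q : Q, (Polynomial.X - Polynomial.C (f q)) with hP
    set n : ℕ := Fintype.card Q with hn
    have hmonic : P.Monic := Polynomial.monic_prod_of_monic _ _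
      (fun q _ => Polynomial.monic_X_sub_C (f q))
    have hdeg : P.natDegree = n := by
      rw [hP, Polynomial.natDegree_prod_of_monic _ _
        (fun q _ => Polynomial.monic_X_sub_C (f q))]
      simp [Polynomial.natDegree_X_sub_C, Polynomial.natDegree_X, hn, Finset.card_univ]
    -- a is a root of P
    have heval : P.eval a = 0 := by
      rw [hP, Polynomial.eval_prod]
      apply Finset.prod_eq_zero (Finset.mem_univ (1 : Q))
      have h10 : (1 : Q).out ∈ G₀ := by
        rw [← QuotientGroup.eq_one_iff, QuotientGroup.out_eq']
      simp [hf, hainv _ h10]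
    -- all lower coefficients of P lie in span (I ∩ A^G)
    have hcoeff : ∀ k < n, P.coeff k ∈
        Ideal.span ((I : Set A) ∩ {a : A | ∀ g : G, g • a = a}) := by
      intro k hk
      apply Ideal.subset_span
      constructor
      · exact coeff_prod_X_sub_C_mem_aux I Finset.univ f (fun q _ => hfI q) k
          (by simpa [Finset.card_univ] using hk)
      · intro g
        have hmap : P.map (MulSemiringAction.toRingHom G A g) = P := by
          rw [hP, Polynomial.map_prod]
          simp only [Polynomial.map_sub, Polynomial.map_X, Polynomial.map_C]
          exact Fintype.prod_equiv (MulAction.toPerm g)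
            (fun q => Polynomial.X - Polynomial.C (MulSemiringAction.toRingHom G A g (f q)))
            (fun q => Polynomial.X - Polynomial.C (f q))
            (fun q => by
              show Polynomial.X - Polynomial.C (MulSemiringAction.toRingHom G A g (f q))
                = Polynomial.X - Polynomial.C (f (g • q))
              rw [show MulSemiringAction.toRingHom G A g (f q) = g • f q from rfl, hkey g q])
        have := congrArg (fun p => Polynomial.coeff p k) hmap
        simpa [Polynomial.coeff_map] using this
    -- a ^ n ∈ span (I ∩ A^G)
    rw [SetLike.mem_coe, Ideal.mem_radical_iff]
    refine ⟨n, ?_⟩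
    have heval2 : P.eval a = ∑ k ∈ Finset.range (n + 1), P.coeff k * a ^ k := by
      rw [Polynomial.eval_eq_sum_range, hdeg]
    rw [Finset.sum_range_succ] at heval2
    have hlead : P.coeff n = 1 := by
      have := hmonic.coeff_natDegree
      rwa [hdeg] at this
    rw [hlead, one_mul, heval] at heval2
    have : a ^ n = -∑ k ∈ Finset.range n, P.coeff k * a ^ k := by
      linear_combination -heval2
    rw [this]
    apply neg_mem
    exact Ideal.sum_mem _ (fun k hk =>
      Ideal.mul_mem_right _ _ (hcoeff k (Finset.mem_range.mp hk)))
end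

section
/- Let k be a field, n a natural number, w : Fin n → ℤ a weight function, and v : Fin n → k a point of affine n-space. Grade the polynomial ring k[X_1,…,X_n] by giving the variable X_i the weight w(i). Then the following are equivalent: (a) every polynomial f ∈ k[X_1,…,X_n] that is weighted homogeneous of weight 0 with respect to w and has zero constant coefficient satisfies f(v) = 0; (b) either v_i = 0 for every index i with w(i) ≤ 0, or v_i = 0 for every index i with w(i) ≥ 0. -/
open MvPolynomial

private lemma eval_zero_of_vanish {k : Type*} [Field k] {n : ℕ} (w : Fin n → ℤ)
    (v : Fin n → k) (sgn : ℤ) (hsgn : sgn = 1 ∨ sgn = -1)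
    (hv : ∀ i : Fin n, sgn * w i ≤ 0 → v i = 0)
    (f : MvPolynomial (Fin n) k) (hf : f.IsWeightedHomogeneous w 0)
    (hc : MvPolynomial.coeff 0 f = 0) : MvPolynomial.eval v f = 0 := by
  rw [MvPolynomial.eval_eq]
  apply Finset.sum_eq_zero
  intro d hd
  rw [MvPolynomial.mem_support_iff] at hd
  have hd0 : d ≠ 0 := by rintro rfl; exact hd hc
  have hw0 : Finsupp.weight w d = 0 := hf hd
  -- find an index in the support of d with sgn * w i ≤ 0
  have : ∃ i ∈ d.support, sgn * w i ≤ 0 := by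
    by_contra hno
    push_neg at hno
    have hsum : (0 : ℤ) < ∑ i ∈ d.support, (d i : ℤ) * (sgn * w i) := by
      apply Finset.sum_pos
      · intro i hi
        have hdi : 0 < d i := Nat.pos_of_ne_zero (Finsupp.mem_support_iff.mp hi)
        exact mul_pos (by exact_mod_cast hdi) (hno i hi)
      · rw [Finsupp.support_nonempty_iff]; exact hd0
    have : ∑ i ∈ d.support, (d i : ℤ) * (sgn * w i)
        = sgn * ∑ i ∈ d.support, (d i : ℤ) * w i := by
      rw [Finset.mul_sum]; congr 1; ext i; ring
    rw [this] at hsum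
    have hw : ∑ i ∈ d.support, (d i : ℤ) * w i = 0 := by
      have := hw0
      rw [Finsupp.weight_apply, Finsupp.sum] at this
      simpa [zsmul_eq_mul, smul_eq_mul] using this
    rw [hw, mul_zero] at hsum
    exact lt_irrefl 0 hsum
  obtain ⟨i, hi, hwi⟩ := this
  have hvi : v i = 0 := hv i hwi
  have : ∏ j ∈ d.support, v j ^ d j = 0 := by
    apply Finset.prod_eq_zero hi
    rw [hvi, zero_pow (Finsupp.mem_support_iff.mp hi)]
  rw [this, mul_zero]

/-- **The `𝔾ₘ`-saturation of the origin in a weighted representation.**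
Let `k` be a field, `w : Fin n → ℤ` a weight function (giving a `𝔾ₘ`-action on
affine `n`-space), and `v` a point of affine `n`-space over `k`.  Then every
weighted-homogeneous polynomial of weight `0` with zero constant coefficient
(i.e. every nonconstant-part of an invariant function) vanishes at `v` if and
only if `v` vanishes at all coordinates of nonpositive weight, or `v` vanishes
at all coordinates of nonnegative weight (i.e. `v ∈ V_λ⁺ ∪ V_λ⁻`). -/
theorem saturation_of_origin_eq_plus_union_minus
    {k : Type*} [Field k] (n : ℕ) (w : Fin n → ℤ) (v : Fin n → k) :
    (∀ f : MvPolynomial (Fin n) k, f.IsWeightedHomogeneous w 0 →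
        MvPolynomial.coeff 0 f = 0 → MvPolynomial.eval v f = 0)
      ↔ ((∀ i : Fin n, w i ≤ 0 → v i = 0) ∨ (∀ i : Fin n, 0 ≤ w i → v i = 0)) := by
  constructor
  · intro h
    by_contra hcon
    push_neg at hcon
    obtain ⟨⟨i, hwi, hvi⟩, ⟨j, hwj, hvj⟩⟩ := hcon
    -- handle weight-zero coordinates first
    rcases eq_or_lt_of_le hwi with hwi0 | hwi0
    · -- w i = 0 : f = X i
      have := h (MvPolynomial.X i)
        (by simpa [← hwi0] using MvPolynomial.isWeightedHomogeneous_X k w i)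
        (by simp [MvPolynomial.coeff_X', Finsupp.single_eq_zero])
      simp at this
      exact hvi this
    rcases eq_or_lt_of_le hwj with hwj0 | hwj0
    · have := h (MvPolynomial.X j)
        (by simpa [hwj0] using MvPolynomial.isWeightedHomogeneous_X k w j)
        (by simp [MvPolynomial.coeff_X', Finsupp.single_eq_zero])
      simp at this
      exact hvj this
    -- now w i < 0 < w j
    have hij : i ≠ j := by rintro rfl; omega
    set d : Fin n →₀ ℕ := Finsupp.single i (w j).toNat + Finsupp.single j (-w i).toNat with hd
    have hdw : Finsupp.weight w d = 0 := by
      rw [hd, map_add]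
      have h1 : Finsupp.weight w (Finsupp.single i (w j).toNat) = (w j).toNat • w i := by
        simp [Finsupp.weight_apply, Finsupp.sum_single_index]
      have h2 : Finsupp.weight w (Finsupp.single j (-w i).toNat) = (-w i).toNat • w j := by
        simp [Finsupp.weight_apply, Finsupp.sum_single_index]
      rw [h1, h2, nsmul_eq_mul, nsmul_eq_mul,
        Int.toNat_of_nonneg (le_of_lt hwj0), Int.toNat_of_nonneg (by omega : (0:ℤ) ≤ -w i)]
      ring
    have hd0 : d ≠ 0 := by
      intro h0
      have : d i = 0 := by rw [h0]; rfl
      rw [hd] at this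
      simp [Finsupp.single_apply, hij] at this
      omega
    have := h (MvPolynomial.monomial d (1 : k))
      (MvPolynomial.isWeightedHomogeneous_monomial w d 1 hdw)
      (by rw [MvPolynomial.coeff_monomial]; simp [hd0])
    rw [MvPolynomial.eval_monomial, one_mul] at this
    have hne : (Finsupp.prod d fun i n => v i ^ n) ≠ 0 := by
      apply Finsupp.prod_ne_zero_iff.mpr
      intro a ha
      rcases Finsupp.mem_support_iff.mp ha with _
      have : d a = (Finsupp.single i (w j).toNat) a + (Finsupp.single j (-w i).toNat) a := rfl
      by_cases hai : a = i
      · subst hai; exact pow_ne_zero _ hvi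
      by_cases haj : a = j
      · subst haj; exact pow_ne_zero _ hvj
      · exfalso; apply Finsupp.mem_support_iff.mp ha
        rw [this]; simp [Finsupp.single_apply, Ne.symm hai, Ne.symm haj]
    exact hne this
  · rintro (hv | hv) f hf hc
    · exact eval_zero_of_vanish w v 1 (Or.inl rfl) (by simpa using hv) f hf hc
    · exact eval_zero_of_vanish w v (-1) (Or.inr rfl)
        (fun i hi => hv i (by omega)) f hf hc
end
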